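/- In the general random intersection graph G(n, a⃗, K⃗, P), the probability that two fixed distinct vertices v₁, v₂ both belong to group A₁ and are both isolated is at most a₁² · (Σ_{ℓ=1}^m a_ℓ · C(P−2K₁, K_ℓ)/C(P, K_ℓ))^{n−2}. -/

import Mathlib

/-!
Write a configuration as `ω = (x, y, τ)`, with `x, y` the group and object set of `v₁, v₂`.
The weight of `x` vanishes unless `x.2` has exactly `K x.1` objects, and isolation forces
`x.2`, `y.2` to be disjoint, so for `x, y` in group `A₁` the union `x.2 ∪ y.2` has `2 K₁`
objects. Given `x, y`, the event is that each of the `n - 2` independent vertices in `τ`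
avoids `x.2 ∪ y.2`, which has probability `∑_ℓ a_ℓ C(P - 2K₁, K_ℓ)/C(P, K_ℓ)`; summing
the weights of `x` and of `y` over group `A₁` gives `a₁` each. The inequality comes from
also admitting the non-disjoint pairs `x, y` in that last sum.
-/

open Finset

attribute [local instance] Classical.propDecidable

/-- Probability weight of a configuration of the general random intersection graph
`G(n, a⃗, K⃗, P)`. -/
noncomputable def cfgWeight (n m P : ℕ) (a : Fin m → ℝ) (K : Fin m → ℕ)
    (ω : Fin n → Fin m × Finset (Fin P)) : ℝ :=
  ∏ v : Fin n,
    (a (ω v).1 * if (ω v).2.card = K (ω v).1 then (1 : ℝ) / (P.choose (K (ω v).1) : ℝ) else 0)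

theorem Finset.card_filter_card_eq_disjoint {α : Type*} [Fintype α] [DecidableEq α]
    (U : Finset α) (c : ℕ) :
    #{S : Finset α | #S = c ∧ Disjoint U S} = (Fintype.card α - #U).choose c := by
  have : ({S : Finset α | #S = c ∧ Disjoint U S} : Finset _) = powersetCard c Uᶜ := by
    ext S
    simp [mem_powersetCard, subset_compl_iff_disjoint_left, and_comm]
  rw [this, card_powersetCard, card_compl]

theorem Fintype.sum_pi_fin_succ {β M : Type*} [Fintype β] [AddCommMonoid M] {k : ℕ}
    (F : (Fin (k + 1) → β) → M) :
    ∑ ω, F ω = ∑ x, ∑ τ : Fin k → β, F (Fin.cons x τ) := by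
  rw [← (Fin.consEquiv fun _ => β).sum_comp, Fintype.sum_prod_type]
  rfl

section IsolatedPair

variable {β : Type*} (A : β → Prop) (D : β → β → Prop)

def IsolatedPair {k : ℕ} (ω : Fin (k + 2) → β) : Prop :=
  A (ω 0) ∧ A (ω 1) ∧ (∀ j ≠ 0, D (ω 0) (ω j)) ∧ ∀ j ≠ 1, D (ω 1) (ω j)

theorem isolatedPair_cons_cons_iff {k : ℕ} (x y : β) (τ : Fin k → β) :
    IsolatedPair A D (Fin.cons x (Fin.cons y τ) : Fin (k + 2) → β) ↔
      (A x ∧ A y ∧ D x y ∧ D y x) ∧ ∀ i, D x (τ i) ∧ D y (τ i) := by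
  have hne : ∀ i : Fin k, (i.succ.succ : Fin (k + 2)) ≠ 1 := fun i h =>
    Fin.succ_ne_zero i (Fin.succ_injective _ (h.trans Fin.succ_zero_eq_one.symm))
  simp only [IsolatedPair, Fin.forall_fin_succ, ← Fin.succ_zero_eq_one]
  simp [hne, forall_and]
  tauto

variable [DecidablePred A] [DecidableRel D] [Fintype β] (g : β → ℝ)

theorem sum_isolatedPair_eq (k : ℕ) :
    ∑ ω : Fin (k + 2) → β, (if IsolatedPair A D ω then ∏ v, g (ω v) else 0) =
      ∑ x, ∑ y, if A x ∧ A y ∧ D x y ∧ D y x then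
        g x * g y * (∑ z, if D x z ∧ D y z then g z else 0) ^ k else 0 := by
  simp only [Fintype.sum_pi_fin_succ (k := k + 1), Fintype.sum_pi_fin_succ (k := k)]
  refine Fintype.sum_congr _ _ fun x => Fintype.sum_congr _ _ fun y => ?_
  simp only [isolatedPair_cons_cons_iff, Fin.prod_univ_succ, Fin.cons_zero, Fin.cons_succ]
  split_ifs with hxy
  · simp only [hxy, true_and, Fintype.sum_pow, Fintype.prod_ite_zero, Finset.mul_sum]
    refine Fintype.sum_congr _ _ fun τ => ?_
    split_ifs <;> ring
  · simp [hxy]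

theorem sum_isolatedPair_le (hg : 0 ≤ g) {R : ℝ} (hR : 0 ≤ R)
    (hS : ∀ x y, A x → A y → D x y → g x ≠ 0 → g y ≠ 0 →
      ∑ z, (if D x z ∧ D y z then g z else 0) ≤ R) (k : ℕ) :
    ∑ ω : Fin (k + 2) → β, (if IsolatedPair A D ω then ∏ v, g (ω v) else 0) ≤
      (∑ x, if A x then g x else 0) ^ 2 * R ^ k := by
  have hA : ∀ x, 0 ≤ if A x then g x else 0 := fun x => by split_ifs; exacts [hg x, le_rfl]
  rw [sum_isolatedPair_eq, sq, Finset.sum_mul_sum, Finset.sum_mul]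
  gcongr with x _
  rw [Finset.sum_mul]
  gcongr with y _
  by_cases hxy : A x ∧ A y ∧ D x y ∧ D y x
  · rw [if_pos hxy]
    obtain ⟨hAx, hAy, hDxy, -⟩ := hxy
    rw [if_pos hAx, if_pos hAy]
    rcases eq_or_ne (g x) 0 with hx | hx
    · simp [hx]
    rcases eq_or_ne (g y) 0 with hy | hy
    · simp [hy]
    have hS0 : 0 ≤ ∑ z, if D x z ∧ D y z then g z else 0 :=
      Finset.sum_nonneg fun z _ => by split_ifs; exacts [hg z, le_rfl]
    have := mul_nonneg (hg x) (hg y)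
    gcongr
    exact hS x y hAx hAy hDxy hx hy
  · rw [if_neg hxy]
    exact mul_nonneg (mul_nonneg (hA x) (hA y)) (pow_nonneg hR k)

end IsolatedPair

section RandomIntersectionGraph

variable {m P : ℕ} (a : Fin m → ℝ) (K : Fin m → ℕ)

noncomputable def vertexWeight (z : Fin m × Finset (Fin P)) : ℝ :=
  a z.1 * if z.2.card = K z.1 then (1 : ℝ) / (P.choose (K z.1) : ℝ) else 0

theorem cfgWeight_eq_prod {n : ℕ} (ω : Fin n → Fin m × Finset (Fin P)) :
    cfgWeight n m P a K ω = ∏ v, vertexWeight a K (ω v) := rfl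

theorem vertexWeight_nonneg (ha : ∀ j, 0 ≤ a j) : 0 ≤ vertexWeight (P := P) a K := fun z =>
  mul_nonneg (ha z.1) (by split_ifs <;> positivity)

theorem card_eq_of_vertexWeight_ne_zero {z : Fin m × Finset (Fin P)}
    (h : vertexWeight a K z ≠ 0) : z.2.card = K z.1 := by
  by_contra hz
  exact h (by simp [vertexWeight, hz])

theorem sum_vertexWeight_disjoint_of_group (U : Finset (Fin P)) (ℓ : Fin m) :
    ∑ S, (if Disjoint U S then vertexWeight a K (ℓ, S) else 0) =
      a ℓ * ((P - #U).choose (K ℓ) : ℝ) / (P.choose (K ℓ) : ℝ) := by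
  have h : ∀ S : Finset (Fin P), (if Disjoint U S then vertexWeight a K (ℓ, S) else 0) =
      if #S = K ℓ ∧ Disjoint U S then a ℓ / (P.choose (K ℓ) : ℝ) else 0 := fun S => by
    unfold vertexWeight
    split_ifs <;> simp_all [div_eq_mul_inv]
  rw [Fintype.sum_congr _ _ h, Finset.sum_ite, Finset.sum_const_zero, add_zero,
    Finset.sum_const, nsmul_eq_mul, Finset.card_filter_card_eq_disjoint, Fintype.card_fin]
  ring

theorem sum_vertexWeight_disjoint (U : Finset (Fin P)) :
    ∑ z, (if Disjoint U z.2 then vertexWeight a K z else 0) =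
      ∑ ℓ, a ℓ * ((P - #U).choose (K ℓ) : ℝ) / (P.choose (K ℓ) : ℝ) := by
  rw [Fintype.sum_prod_type]
  exact Fintype.sum_congr _ _ (sum_vertexWeight_disjoint_of_group a K U)

theorem sum_vertexWeight_disjoint_pair {x y : Fin m × Finset (Fin P)} (hxy : Disjoint x.2 y.2)
    (hx : vertexWeight a K x ≠ 0) (hy : vertexWeight a K y ≠ 0) :
    ∑ z, (if Disjoint x.2 z.2 ∧ Disjoint y.2 z.2 then vertexWeight a K z else 0) =
      ∑ ℓ, a ℓ * ((P - (K x.1 + K y.1)).choose (K ℓ) : ℝ) / (P.choose (K ℓ) : ℝ) := by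
  simp only [← Finset.disjoint_union_left]
  rw [sum_vertexWeight_disjoint, card_union_of_disjoint hxy,
    card_eq_of_vertexWeight_ne_zero a K hx, card_eq_of_vertexWeight_ne_zero a K hy]

theorem sum_vertexWeight_of_group {q : Fin m} (hq : K q ≤ P) :
    ∑ z : Fin m × Finset (Fin P), (if z.1 = q then vertexWeight a K z else 0) = a q := by
  have h := sum_vertexWeight_disjoint_of_group a K (∅ : Finset (Fin P)) q
  have hC : (P.choose (K q) : ℝ) ≠ 0 := by exact_mod_cast (Nat.choose_pos hq).ne'
  simp only [Finset.disjoint_empty_left, if_true, Finset.card_empty, Nat.sub_zero] at h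
  rw [Fintype.sum_prod_type, Fintype.sum_eq_single q fun ℓ hℓ => by simp [hℓ]]
  simp only [if_true, h, mul_div_assoc, div_self hC, mul_one]

end RandomIntersectionGraph

theorem stmt_13_general (n m P : ℕ) (hn : 1 < n) (hm : 0 < m) (a : Fin m → ℝ)
    (ha : ∀ j, 0 < a j)
    (K : Fin m → ℕ)
    (hKP : ∀ ℓ, 2 * K ⟨0, hm⟩ + K ℓ ≤ P) :
    (∑ ω : Fin n → Fin m × Finset (Fin P),
        if (ω ⟨0, lt_trans Nat.one_pos hn⟩).1 = ⟨0, hm⟩ ∧ (ω ⟨1, hn⟩).1 = ⟨0, hm⟩ ∧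
            (∀ j : Fin n, j ≠ ⟨0, lt_trans Nat.one_pos hn⟩ →
              Disjoint (ω ⟨0, lt_trans Nat.one_pos hn⟩).2 (ω j).2) ∧
            (∀ j : Fin n, j ≠ ⟨1, hn⟩ → Disjoint (ω ⟨1, hn⟩).2 (ω j).2)
        then cfgWeight n m P a K ω else 0) ≤
    (a ⟨0, hm⟩)^2 *
      (∑ ℓ : Fin m, a ℓ *
        ((P - 2 * K ⟨0, hm⟩).choose (K ℓ) : ℝ) / ((P.choose (K ℓ)) : ℝ)) ^ (n - 2) := by
  obtain ⟨k, rfl⟩ : ∃ k, n = k + 2 := ⟨n - 2, by omega⟩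
  set q : Fin m := ⟨0, hm⟩
  set R := ∑ ℓ : Fin m, a ℓ * ((P - 2 * K q).choose (K ℓ) : ℝ) / ((P.choose (K ℓ)) : ℝ)
  have hR : 0 ≤ R := Finset.sum_nonneg fun ℓ _ => by have := (ha ℓ).le; positivity
  have hS : ∀ x y : Fin m × Finset (Fin P), x.1 = q → y.1 = q → Disjoint x.2 y.2 →
      vertexWeight a K x ≠ 0 → vertexWeight a K y ≠ 0 →
      ∑ z, (if Disjoint x.2 z.2 ∧ Disjoint y.2 z.2 then vertexWeight a K z else 0) ≤ R :=
    fun x y hx hy hxy hwx hwy => by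
      rw [sum_vertexWeight_disjoint_pair a K hxy hwx hwy, hx, hy, ← two_mul]
  have key := sum_isolatedPair_le (fun z : Fin m × Finset (Fin P) => z.1 = q)
    (fun x z => Disjoint x.2 z.2) _ (vertexWeight_nonneg a K fun j => (ha j).le) hR hS k
  rw [sum_vertexWeight_of_group a K (by have := hKP q; omega)] at key
  rw [Nat.add_sub_cancel]
  refine le_of_eq_of_le ?_ key
  -- up to unfolding, the two sides differ only in their `Decidable` instances
  exact Fintype.sum_congr _ _ fun ω => if_congr Iff.rfl (cfgWeight_eq_prod a K ω) rfl

/-- The probability that two fixed distinct vertices `v₁, v₂` both belong to group `A₁`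
and are both isolated in `G(n, a⃗, K⃗, P)` is at most
`a₁² · (∑_ℓ a_ℓ C(P-2K₁, K_ℓ)/C(P, K_ℓ))^{n-2}`. -/
theorem stmt_13 (n m P : ℕ) (hn : 1 < n) (hm : 0 < m) (a : Fin m → ℝ)
    (ha : ∀ j, 0 < a j) (hsum : ∑ j, a j = 1)
    (K : Fin m → ℕ) (hK1 : ∀ j, 1 ≤ K j)
    (hKP : ∀ ℓ, 2 * K ⟨0, hm⟩ + K ℓ ≤ P) :
    (∑ ω : Fin n → Fin m × Finset (Fin P),
        if (ω ⟨0, lt_trans Nat.one_pos hn⟩).1 = ⟨0, hm⟩ ∧ (ω ⟨1, hn⟩).1 = ⟨0, hm⟩ ∧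
            (∀ j : Fin n, j ≠ ⟨0, lt_trans Nat.one_pos hn⟩ →
              Disjoint (ω ⟨0, lt_trans Nat.one_pos hn⟩).2 (ω j).2) ∧
            (∀ j : Fin n, j ≠ ⟨1, hn⟩ → Disjoint (ω ⟨1, hn⟩).2 (ω j).2)
        then cfgWeight n m P a K ω else 0) ≤
    (a ⟨0, hm⟩)^2 *
      (∑ ℓ : Fin m, a ℓ *
        ((P - 2 * K ⟨0, hm⟩).choose (K ℓ) : ℝ) / ((P.choose (K ℓ)) : ℝ)) ^ (n - 2) :=
  stmt_13_general n m P hn hm a ha K hKP
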